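/- arXiv:1512.05895 — 7 statements merged into one kernel-verified Lean document; each statement's English description precedes it below -/
import Mathlib

section
/- Fix constants γ > 0, c > 0 and 0 < ζ < 1/2. There exists a constant C = C(γ, c, ζ) > 0 such that for every natural number N ≥ 2, setting h = 1/N, R = ⌈h^{-ζ}⌉ and taking the uniform weights J(j) = c for 1 ≤ j ≤ R, the discrete eigenvalues λ_k^h = (4γ/(h²R³)) · ∑_{j=1}^{R} c·sin²(π·k·h·j/2) are strictly positive for every 1 ≤ k ≤ N and satisfy ∑_{k=1}^{N} (λ_k^h)^{-1} ≤ C. (This is the uniform boundedness of the sum of inverse eigenvalues of the long-range discrete operator, Lemma 2.1 of the paper.) -/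
open Real Finset

/-!
Write `λ_k = 4γc/(h²R³) · S(kh, R)` with `S(x, R) = ∑_{j=1}^R sin²(πxj/2)`. If `xR ≥ 2`, the
identity `sin²t = (1 - cos 2t)/2` and the telescoped Dirichlet sum `∑ cos(2θj) ≤ 1/sin θ`
(`θ = πx/2`) give `S ≥ R/4`; otherwise the first `R/2` angles lie in `[0, π/2]`, where Jordan's
inequality `sin(πt/2) ≥ t` gives `S ≥ x²R³/192`. Hence `λ_k ≥ γc · min(N²/R², k²/48)`, so
`∑ 1/λ_k ≤ (R²/N + 48 ∑ 1/k²)/(γc)`, which is bounded because `R² ≲ N^{2ζ} ≤ N`.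
-/

lemma le_sin_pi_mul_div_two {t : ℝ} (h0 : 0 ≤ t) (h1 : t ≤ 1) : t ≤ sin (π * t / 2) := by
  have := mul_le_sin (x := π * t / 2) (by positivity) (by nlinarith [pi_pos])
  rwa [show 2 / π * (π * t / 2) = t by field_simp] at this

lemma cube_le_three_mul_sum_sq (m : ℕ) : (m : ℝ) ^ 3 ≤ 3 * ∑ j ∈ Icc 1 m, (j : ℝ) ^ 2 := by
  induction m with
  | zero => simp
  | succ m ih =>
    rw [sum_Icc_succ_top (by omega)]
    push_cast
    nlinarith [Nat.cast_nonneg (α := ℝ) m]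

lemma sum_Icc_inv_sq_le_two (N : ℕ) : ∑ k ∈ Icc 1 N, ((k : ℝ) ^ 2)⁻¹ ≤ 2 := by
  have hIcc : Icc 1 N = Ioo 0 (N + 1) := by ext; simp; omega
  simpa [hIcc] using sum_Ioo_inv_sq_le (α := ℝ) 0 (N + 1)

lemma two_mul_sin_mul_sum_cos (θ : ℝ) (R : ℕ) :
    2 * sin θ * ∑ j ∈ Icc 1 R, cos (2 * θ * j) = sin ((2 * R + 1) * θ) - sin θ := by
  induction R with
  | zero => simp
  | succ R ih =>
    have hstep : sin ((2 * ((R + 1 : ℕ) : ℝ) + 1) * θ) - sin ((2 * R + 1) * θ)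
        = 2 * sin θ * cos (2 * θ * ((R + 1 : ℕ) : ℝ)) := by
      rw [sin_sub_sin]; push_cast; ring_nf
    rw [sum_Icc_succ_top (by omega), mul_add, ih]
    linarith

lemma natCeil_rpow_bounds {N ζ : ℝ} (hN : 1 < N) (hζ0 : 0 < ζ) (hζ : ζ ≤ 1 / 2) :
    2 ≤ ⌈N ^ ζ⌉₊ ∧ (⌈N ^ ζ⌉₊ : ℝ) ^ 2 ≤ 4 * N := by
  have hNζ : 1 < N ^ ζ := one_lt_rpow hN hζ0
  refine ⟨Nat.lt_ceil.2 (by exact_mod_cast hNζ), ?_⟩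
  calc (⌈N ^ ζ⌉₊ : ℝ) ^ 2 ≤ (2 * N ^ ζ) ^ 2 := by
        gcongr; exact Nat.ceil_le_two_mul (by linarith)
    _ = 4 * N ^ (2 * ζ) := by
        rw [mul_pow, ← rpow_natCast (N ^ ζ), ← rpow_mul (by linarith)]; ring_nf
    _ ≤ 4 * N := by
        gcongr
        simpa using rpow_le_rpow_of_exponent_le hN.le (show 2 * ζ ≤ 1 by linarith)

noncomputable def sinSqSum (x : ℝ) (R : ℕ) : ℝ := ∑ j ∈ Icc 1 R, sin (π * x * j / 2) ^ 2

lemma div_four_le_sinSqSum {x : ℝ} {R : ℕ} (hx0 : 0 < x) (hx1 : x ≤ 1) (hxR : 2 ≤ x * R) :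
    (R : ℝ) / 4 ≤ sinSqSum x R := by
  set θ := π * x / 2 with hθ
  have hxθ : x ≤ sin θ := le_sin_pi_mul_div_two hx0.le hx1
  have hsum : sinSqSum x R = R / 2 - (∑ j ∈ Icc 1 R, cos (2 * θ * j)) / 2 := by
    simp only [sinSqSum, sin_sq_eq_half_sub, sum_sub_distrib, ← sum_div, sum_const,
      Nat.card_Icc, nsmul_eq_mul]
    congr 2
    · simp
    · exact sum_congr rfl fun j _ => by rw [hθ]; ring_nf
  have hdir := two_mul_sin_mul_sum_cos θ R
  have hsin := sin_le_one ((2 * R + 1) * θ)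
  rw [hsum]
  -- `sin θ · ∑ cos ≤ 1` and `sin θ ≥ x ≥ 2/R` give `∑ cos ≤ R/2`
  nlinarith [mul_le_mul_of_nonneg_left hxθ (sub_nonneg.2 hxR)]

lemma le_sinSqSum {x : ℝ} {m R : ℕ} (hx0 : 0 ≤ x) (hmR : m ≤ R) (hxm : x * m ≤ 1) :
    x ^ 2 * (m : ℝ) ^ 3 / 3 ≤ sinSqSum x R := by
  have hterm : ∀ j ∈ Icc 1 m, (x * j) ^ 2 ≤ sin (π * x * j / 2) ^ 2 := by
    intro j hj
    have hjm : (j : ℝ) ≤ m := by exact_mod_cast (mem_Icc.1 hj).2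
    have := le_sin_pi_mul_div_two (t := x * j) (by positivity) (by nlinarith)
    rw [← mul_assoc] at this
    gcongr
  calc x ^ 2 * (m : ℝ) ^ 3 / 3 ≤ x ^ 2 * ∑ j ∈ Icc 1 m, (j : ℝ) ^ 2 := by
        nlinarith [cube_le_three_mul_sum_sq m, sq_nonneg x]
    _ = ∑ j ∈ Icc 1 m, (x * j) ^ 2 := by simp only [mul_sum, mul_pow]
    _ ≤ ∑ j ∈ Icc 1 m, sin (π * x * j / 2) ^ 2 := sum_le_sum hterm
    _ ≤ sinSqSum x R :=
        sum_le_sum_of_subset_of_nonneg (Icc_subset_Icc_right hmR) fun _ _ _ => sq_nonneg _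

lemma min_le_sinSqSum {x : ℝ} {R : ℕ} (hx0 : 0 < x) (hx1 : x ≤ 1) (hR : 2 ≤ R) :
    min ((R : ℝ) / 4) (x ^ 2 * (R : ℝ) ^ 3 / 192) ≤ sinSqSum x R := by
  rcases le_or_gt 2 (x * R) with hxR | hxR
  · exact min_le_of_left_le (div_four_le_sinSqSum hx0 hx1 hxR)
  refine min_le_of_right_le ?_
  have hhalf : (R : ℝ) ≤ 4 * (R / 2 : ℕ) := by exact_mod_cast (by omega : R ≤ 4 * (R / 2))
  have hhalf_le : ((R / 2 : ℕ) : ℝ) * 2 ≤ R := by exact_mod_cast Nat.div_mul_le_self R 2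
  calc x ^ 2 * (R : ℝ) ^ 3 / 192 = x ^ 2 * ((R : ℝ) / 4) ^ 3 / 3 := by ring
    _ ≤ x ^ 2 * ((R / 2 : ℕ) : ℝ) ^ 3 / 3 := by gcongr; linarith
    _ ≤ sinSqSum x R := le_sinSqSum hx0.le (Nat.div_le_self R 2) (by nlinarith)

noncomputable def longRangeEigenvalue (γ c h : ℝ) (R k : ℕ) : ℝ :=
  (4 * γ / (h ^ 2 * (R : ℝ) ^ 3)) * ∑ j ∈ Icc 1 R, c * sin (π * k * h * j / 2) ^ 2

lemma longRangeEigenvalue_eq (γ c h : ℝ) (R k : ℕ) :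
    longRangeEigenvalue γ c h R k = 4 * γ * c / (h ^ 2 * (R : ℝ) ^ 3) * sinSqSum (k * h) R := by
  simp only [longRangeEigenvalue, sinSqSum, ← mul_sum, mul_assoc, mul_div_assoc]
  ring_nf

lemma min_le_longRangeEigenvalue {γ c : ℝ} (hγ : 0 ≤ γ) (hc : 0 ≤ c) {N R k : ℕ}
    (hk1 : 1 ≤ k) (hkN : k ≤ N) (hR : 2 ≤ R) :
    γ * c * min ((N : ℝ) ^ 2 / (R : ℝ) ^ 2) ((k : ℝ) ^ 2 / 48)
      ≤ longRangeEigenvalue γ c (1 / N) R k := by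
  have hk : (1 : ℝ) ≤ k := by exact_mod_cast hk1
  have hN : (k : ℝ) ≤ N := by exact_mod_cast hkN
  have hN0 : (0 : ℝ) < N := by linarith
  have hx1 : (k : ℝ) * (1 / N) ≤ 1 := by rw [mul_one_div, div_le_one (by linarith)]; exact hN
  rw [longRangeEigenvalue_eq]
  calc γ * c * min ((N : ℝ) ^ 2 / (R : ℝ) ^ 2) ((k : ℝ) ^ 2 / 48)
      = 4 * γ * c / ((1 / N) ^ 2 * (R : ℝ) ^ 3)
          * min ((R : ℝ) / 4) (((k : ℝ) * (1 / N)) ^ 2 * (R : ℝ) ^ 3 / 192) := by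
        rw [mul_min_of_nonneg _ _ (by positivity), mul_min_of_nonneg _ _ (by positivity)]
        congr 1 <;> field_simp
        ring
    _ ≤ _ := by gcongr; exact min_le_sinSqSum (mul_pos (by linarith) (one_div_pos.2 hN0)) hx1 hR

lemma inv_longRangeEigenvalue_le {γ c : ℝ} (hγ : 0 < γ) (hc : 0 < c) {N R k : ℕ}
    (hk1 : 1 ≤ k) (hkN : k ≤ N) (hR : 2 ≤ R) :
    0 < longRangeEigenvalue γ c (1 / N) R k ∧
      (longRangeEigenvalue γ c (1 / N) R k)⁻¹
        ≤ ((R : ℝ) ^ 2 / (N : ℝ) ^ 2 + 48 / (k : ℝ) ^ 2) / (γ * c) := by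
  have hN : (0 : ℝ) < N := by exact_mod_cast hk1.trans hkN
  have hlow := min_le_longRangeEigenvalue hγ.le hc.le hk1 hkN hR
  have hmin : 0 < γ * c * min ((N : ℝ) ^ 2 / (R : ℝ) ^ 2) ((k : ℝ) ^ 2 / 48) := by positivity
  refine ⟨hmin.trans_le hlow, (inv_anti₀ hmin hlow).trans ?_⟩
  rw [mul_inv, inv_mul_eq_div]
  gcongr
  rcases min_choice ((N : ℝ) ^ 2 / (R : ℝ) ^ 2) ((k : ℝ) ^ 2 / 48) with h | h <;>
    rw [h, inv_div] <;> linarith [show (0 : ℝ) ≤ 48 / k ^ 2 by positivity,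
      show (0 : ℝ) ≤ R ^ 2 / N ^ 2 by positivity]

/-- **Uniform boundedness of the sum of inverse eigenvalues** (Lemma 2.1).
For fixed `γ, c > 0` and `0 < ζ < 1/2`, there is a constant `C` such that for every `N ≥ 2`,
with `h = 1/N`, `R = ⌈h^{-ζ}⌉` and uniform weights `J(j) = c`, the discrete eigenvalues
`λ_k^h = (4γ/(h²R³)) ∑_{j=1}^R c sin²(πkhj/2)` are positive for `1 ≤ k ≤ N` and
`∑_{k=1}^N (λ_k^h)⁻¹ ≤ C`. -/
theorem sum_inv_eigenvalues_bounded
    (γ c ζ : ℝ) (hγ : 0 < γ) (hc : 0 < c) (hζ0 : 0 < ζ) (hζ : ζ < 1 / 2) :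
    ∃ C : ℝ, 0 < C ∧
      ∀ N : ℕ, 2 ≤ N →
        ∀ h : ℝ, h = 1 / (N : ℝ) →
          ∀ R : ℕ, R = ⌈h ^ (-ζ)⌉₊ →
            (∀ k : ℕ, 1 ≤ k → k ≤ N →
              0 < (4 * γ / (h ^ 2 * (R : ℝ) ^ 3)) *
                    ∑ j ∈ Finset.Icc 1 R, c * Real.sin (π * k * h * j / 2) ^ 2) ∧
            ∑ k ∈ Finset.Icc 1 N,
              ((4 * γ / (h ^ 2 * (R : ℝ) ^ 3)) *
                  ∑ j ∈ Finset.Icc 1 R, c * Real.sin (π * k * h * j / 2) ^ 2)⁻¹ ≤ C := by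
  refine ⟨100 / (γ * c), by positivity, ?_⟩
  rintro N hN h rfl R rfl
  have hN1 : (1 : ℝ) < N := by exact_mod_cast hN
  have hpow : (1 / (N : ℝ)) ^ (-ζ) = (N : ℝ) ^ ζ := by
    rw [rpow_neg (by positivity), one_div, inv_rpow (by positivity), inv_inv]
  obtain ⟨hR2, hRN⟩ := natCeil_rpow_bounds hN1 hζ0 hζ.le
  rw [hpow]
  set R := ⌈(N : ℝ) ^ ζ⌉₊
  have hinv k (hk : k ∈ Icc 1 N) :=
    inv_longRangeEigenvalue_le hγ hc (mem_Icc.1 hk).1 (mem_Icc.1 hk).2 hR2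
  refine ⟨fun k hk1 hkN => (hinv k (mem_Icc.2 ⟨hk1, hkN⟩)).1, ?_⟩
  calc ∑ k ∈ Icc 1 N, (longRangeEigenvalue γ c (1 / N) R k)⁻¹
      ≤ ∑ k ∈ Icc 1 N, ((R : ℝ) ^ 2 / (N : ℝ) ^ 2 + 48 / (k : ℝ) ^ 2) / (γ * c) :=
        sum_le_sum fun k hk => (hinv k hk).2
    _ = ((R : ℝ) ^ 2 / N + 48 * ∑ k ∈ Icc 1 N, ((k : ℝ) ^ 2)⁻¹) / (γ * c) := by
        rw [← sum_div, sum_add_distrib, sum_const, Nat.card_Icc, mul_sum]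
        simp only [nsmul_eq_mul, Nat.add_sub_cancel, div_eq_mul_inv]
        field_simp
    _ ≤ (4 + 48 * 2) / (γ * c) := by
        gcongr
        · rw [div_le_iff₀ (by positivity)]; exact hRN
        · exact sum_Icc_inv_sq_le_two N
    _ = 100 / (γ * c) := by norm_num
end

section
/- Let γ > 0, let N, R ≥ 1 be natural numbers, set h = 1/N, and let J : {1, …, R} → [0, ∞) satisfy (1/R³) · ∑_{j=1}^{R} J(j)·j² = 1. Then for every natural number k ≥ 1 with k·h·R ≤ 1, the discrete eigenvalue λ_k^h = (4γ/(h²R³)) · ∑_{j=1}^{R} J(j)·sin²(π·k·h·j/2) satisfies the lower bound λ_k^h ≥ 4·γ·k². -/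
open Real Finset

/-- **Lower bound on the discrete eigenvalues**: under the second-moment normalization
`(1/R³) ∑_{j=1}^R J(j) j² = 1` and in the low-frequency regime `k·h·R ≤ 1`, the discrete
eigenvalue `λ_k^h = (4γ/(h²R³)) ∑_{j=1}^R J(j) sin²(πkhj/2)` satisfies `λ_k^h ≥ 4γk²`. -/
theorem discrete_eigenvalue_lower_bound
    (γ : ℝ) (hγ : 0 < γ) (N R : ℕ) (hN : 1 ≤ N) (hR : 1 ≤ R)
    (h : ℝ) (hh : h = 1 / (N : ℝ))
    (J : ℕ → ℝ) (hJ : ∀ j ∈ Finset.Icc 1 R, 0 ≤ J j)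
    (hnorm : (1 / (R : ℝ) ^ 3) * ∑ j ∈ Finset.Icc 1 R, J j * (j : ℝ) ^ 2 = 1)
    (k : ℕ) (hk : 1 ≤ k) (hkhR : (k : ℝ) * h * R ≤ 1) :
    4 * γ * (k : ℝ) ^ 2 ≤
      (4 * γ / (h ^ 2 * (R : ℝ) ^ 3)) *
        ∑ j ∈ Finset.Icc 1 R, J j * Real.sin (π * k * h * j / 2) ^ 2 := by
  have hN0 : (0 : ℝ) < N := by exact_mod_cast hN
  have hh0 : 0 < h := by rw [hh]; positivity
  have hR0 : (0 : ℝ) < R := by exact_mod_cast hR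
  have hk0 : (0 : ℝ) < k := by exact_mod_cast hk
  -- pointwise bound: sin²(πkhj/2) ≥ (khj)²
  have key : ∀ j ∈ Finset.Icc 1 R,
      J j * ((k : ℝ) * h) ^ 2 * (j : ℝ) ^ 2 ≤ J j * Real.sin (π * k * h * j / 2) ^ 2 := by
    intro j hj
    obtain ⟨hj1, hjR⟩ := Finset.mem_Icc.mp hj
    have hj0 : (0 : ℝ) < j := by exact_mod_cast hj1
    have hjR' : (j : ℝ) ≤ R := by exact_mod_cast hjR
    have hkhj : (k : ℝ) * h * j ≤ 1 := by
      calc (k : ℝ) * h * j ≤ (k : ℝ) * h * R := by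
            apply mul_le_mul_of_nonneg_left hjR' (by positivity)
        _ ≤ 1 := hkhR
    have hx0 : 0 ≤ π * k * h * j / 2 := by positivity
    have hx1 : π * k * h * j / 2 ≤ π / 2 := by
      have hπ := Real.pi_pos
      rw [div_le_div_iff_of_pos_right two_pos]
      calc π * k * h * j = π * ((k : ℝ) * h * j) := by ring
        _ ≤ π * 1 := by apply mul_le_mul_of_nonneg_left hkhj hπ.le
        _ = π := mul_one π
    have hsin := Real.mul_le_sin hx0 hx1
    have hsin' : (k : ℝ) * h * j ≤ Real.sin (π * k * h * j / 2) := by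
      have hπ : (0 : ℝ) < π := Real.pi_pos
      calc (k : ℝ) * h * j = 2 / π * (π * k * h * j / 2) := by
            field_simp
        _ ≤ _ := hsin
    have hsq : ((k : ℝ) * h * j) ^ 2 ≤ Real.sin (π * k * h * j / 2) ^ 2 := by
      apply pow_le_pow_left₀ (by positivity) hsin'
    have hJj := hJ j hj
    calc J j * ((k : ℝ) * h) ^ 2 * (j : ℝ) ^ 2 = J j * ((k : ℝ) * h * j) ^ 2 := by ring
      _ ≤ J j * Real.sin (π * k * h * j / 2) ^ 2 := by
          apply mul_le_mul_of_nonneg_left hsq hJj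
  have hsum := Finset.sum_le_sum key
  have hsumval : ∑ j ∈ Finset.Icc 1 R, J j * ((k : ℝ) * h) ^ 2 * (j : ℝ) ^ 2
      = ((k : ℝ) * h) ^ 2 * (R : ℝ) ^ 3 := by
    have h1 : ∑ j ∈ Finset.Icc 1 R, J j * (j : ℝ) ^ 2 = (R : ℝ) ^ 3 := by
      have hR3 : (R : ℝ) ^ 3 ≠ 0 := by positivity
      field_simp at hnorm
      linarith [hnorm]
    calc ∑ j ∈ Finset.Icc 1 R, J j * ((k : ℝ) * h) ^ 2 * (j : ℝ) ^ 2
        = ((k : ℝ) * h) ^ 2 * ∑ j ∈ Finset.Icc 1 R, J j * (j : ℝ) ^ 2 := by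
          rw [Finset.mul_sum]; apply Finset.sum_congr rfl; intro j _; ring
      _ = ((k : ℝ) * h) ^ 2 * (R : ℝ) ^ 3 := by rw [h1]
  rw [hsumval] at hsum
  have hc : 0 < 4 * γ / (h ^ 2 * (R : ℝ) ^ 3) := by positivity
  calc 4 * γ * (k : ℝ) ^ 2
      = (4 * γ / (h ^ 2 * (R : ℝ) ^ 3)) * (((k : ℝ) * h) ^ 2 * (R : ℝ) ^ 3) := by
        field_simp
    _ ≤ _ := by apply mul_le_mul_of_nonneg_left hsum hc.le
end

section
/- Let γ > 0, let N, R ≥ 1 be natural numbers, set h = 1/N, and let J : {1, …, R} → [0, ∞) satisfy (1/R³) · ∑_{j=1}^{R} J(j)·j² = 1. Then for every natural number k ≥ 1 the discrete eigenvalue λ_k^h = (4γ/(h²R³)) · ∑_{j=1}^{R} J(j)·sin²(π·k·h·j/2) satisfies 0 ≤ γ·π²·k² − λ_k^h ≤ (γ·π⁴/12) · k⁴ · h² · (1/R³) · ∑_{j=1}^{R} J(j)·j⁴. In particular, if additionally (1/R³) · ∑_{j=1}^{R} J(j)·j⁴ ≤ R² and R ≤ h^{-ζ} for some 0 < ζ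 < 1/2, then 0 ≤ γ·π²·k² − λ_k^h ≤ (γ·π⁴/12) · k⁴ · h^{2−2ζ}. (Convergence of eigenvalues, Lemma 2.2 of the paper.) -/
open Real Finset

/-!
For every real `x`, `x² - x⁴/3 ≤ sin² x ≤ x²`; the lower bound follows from `|x - sin x| ≤ |x|³/6`.
With `θ = πkh/2` the eigenvalue is `λ_k^h = 4γ/(h²R³) · ∑ J(j) sin²(θj)`, and replacing `sin²(θj)` by
`(θj)²` gives exactly `γπ²k²` by the normalization `∑ J(j) j² = R³`. The error of that replacement is
at most `4γ/(h²R³) · θ⁴/3 · ∑ J(j) j⁴ = (γπ⁴/12) k⁴ h² R⁻³ ∑ J(j) j⁴`. Under the extra moment bound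
and `R ≤ h^{-ζ}`, `h² R⁻³ ∑ J(j) j⁴ ≤ h² R² ≤ h^{2-2ζ}`.
-/

theorem Real.sq_sub_pow_four_div_three_le_sin_sq (x : ℝ) : x ^ 2 - x ^ 4 / 3 ≤ sin x ^ 2 := by
  have hcross : x * (x - sin x) ≤ x ^ 4 / 6 :=
    calc x * (x - sin x) ≤ |x| * |x - sin x| := (le_abs_self _).trans (abs_mul _ _).le
      _ ≤ |x| * (|x| ^ 3 / 6) := by gcongr; exact abs_sub_sin_le x
      _ = x ^ 4 / 6 := by rw [mul_div_assoc', ← pow_succ', (by decide : Even 4).pow_abs]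
  nlinarith [sq_nonneg (x - sin x)]

theorem sum_mul_sin_sq_le {s : Finset ℕ} {J : ℕ → ℝ} (hJ : ∀ j ∈ s, 0 ≤ J j) (θ : ℝ) :
    ∑ j ∈ s, J j * sin (θ * j) ^ 2 ≤ θ ^ 2 * ∑ j ∈ s, J j * (j : ℝ) ^ 2 := by
  rw [mul_sum]
  refine sum_le_sum fun j hj => ?_
  calc J j * sin (θ * j) ^ 2 ≤ J j * (θ * j) ^ 2 :=
        mul_le_mul_of_nonneg_left sin_sq_le_sq (hJ j hj)
    _ = θ ^ 2 * (J j * (j : ℝ) ^ 2) := by ring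

theorem sub_le_sum_mul_sin_sq {s : Finset ℕ} {J : ℕ → ℝ} (hJ : ∀ j ∈ s, 0 ≤ J j) (θ : ℝ) :
    θ ^ 2 * ∑ j ∈ s, J j * (j : ℝ) ^ 2 - θ ^ 4 / 3 * ∑ j ∈ s, J j * (j : ℝ) ^ 4 ≤
      ∑ j ∈ s, J j * sin (θ * j) ^ 2 := by
  rw [mul_sum, mul_sum, ← sum_sub_distrib]
  refine sum_le_sum fun j hj => ?_
  calc θ ^ 2 * (J j * (j : ℝ) ^ 2) - θ ^ 4 / 3 * (J j * (j : ℝ) ^ 4)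
      = J j * ((θ * j) ^ 2 - (θ * j) ^ 4 / 3) := by ring
    _ ≤ J j * sin (θ * j) ^ 2 :=
      mul_le_mul_of_nonneg_left (sq_sub_pow_four_div_three_le_sin_sq _) (hJ j hj)

noncomputable def discreteEigenvalue (γ h : ℝ) (R : ℕ) (J : ℕ → ℝ) (k : ℝ) : ℝ :=
  4 * γ / (h ^ 2 * (R : ℝ) ^ 3) * ∑ j ∈ Icc 1 R, J j * sin (π * k * h * j / 2) ^ 2

section Eigenvalue

variable {γ h : ℝ} {R : ℕ} {J : ℕ → ℝ} (k : ℝ)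

theorem sq_sub_discreteEigenvalue_eq (hh : h ≠ 0)
    (hnorm : 1 / (R : ℝ) ^ 3 * ∑ j ∈ Icc 1 R, J j * (j : ℝ) ^ 2 = 1) :
    γ * π ^ 2 * k ^ 2 - discreteEigenvalue γ h R J k =
      4 * γ / (h ^ 2 * (R : ℝ) ^ 3) *
        ((π * k * h / 2) ^ 2 * ∑ j ∈ Icc 1 R, J j * (j : ℝ) ^ 2 -
          ∑ j ∈ Icc 1 R, J j * sin (π * k * h / 2 * j) ^ 2) := by
  have hR : (R : ℝ) ≠ 0 := fun h0 => by simp [h0] at hnorm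
  rw [one_div_mul_eq_div, div_eq_one_iff_eq (pow_ne_zero 3 hR)] at hnorm
  have hsin : ∀ j : ℕ, sin (π * k * h * j / 2) = sin (π * k * h / 2 * j) := fun j => by ring_nf
  simp only [discreteEigenvalue, hnorm, hsin]
  field_simp
  ring

theorem discreteEigenvalue_le (hγ : 0 ≤ γ) (hh : h ≠ 0) (hJ : ∀ j ∈ Icc 1 R, 0 ≤ J j)
    (hnorm : 1 / (R : ℝ) ^ 3 * ∑ j ∈ Icc 1 R, J j * (j : ℝ) ^ 2 = 1) :
    discreteEigenvalue γ h R J k ≤ γ * π ^ 2 * k ^ 2 := by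
  rw [← sub_nonneg, sq_sub_discreteEigenvalue_eq k hh hnorm]
  exact mul_nonneg (by positivity) (sub_nonneg.2 (sum_mul_sin_sq_le hJ _))

theorem sq_sub_discreteEigenvalue_le (hγ : 0 ≤ γ) (hh : h ≠ 0) (hJ : ∀ j ∈ Icc 1 R, 0 ≤ J j)
    (hnorm : 1 / (R : ℝ) ^ 3 * ∑ j ∈ Icc 1 R, J j * (j : ℝ) ^ 2 = 1) :
    γ * π ^ 2 * k ^ 2 - discreteEigenvalue γ h R J k ≤
      γ * π ^ 4 / 12 * k ^ 4 * h ^ 2 * (1 / (R : ℝ) ^ 3 * ∑ j ∈ Icc 1 R, J j * (j : ℝ) ^ 4) := by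
  rw [sq_sub_discreteEigenvalue_eq k hh hnorm]
  calc _ ≤ 4 * γ / (h ^ 2 * (R : ℝ) ^ 3) *
        ((π * k * h / 2) ^ 4 / 3 * ∑ j ∈ Icc 1 R, J j * (j : ℝ) ^ 4) := by
        gcongr
        linarith [sub_le_sum_mul_sin_sq hJ (π * k * h / 2)]
    _ = _ := by field_simp; ring

end Eigenvalue

theorem sq_mul_le_rpow_two_sub_two_mul {h r M ζ : ℝ} (hh : 0 < h) (hr : 0 ≤ r)
    (hrh : r ≤ h ^ (-ζ)) (hM : M ≤ r ^ 2) : h ^ 2 * M ≤ h ^ (2 - 2 * ζ) :=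
  calc h ^ 2 * M ≤ h ^ 2 * (h ^ (-ζ)) ^ 2 := by gcongr; exact hM.trans (by gcongr)
    _ = h ^ (2 - 2 * ζ) := by
      rw [← rpow_natCast, ← rpow_natCast, ← rpow_mul hh.le, ← rpow_add hh]
      congr 1
      push_cast
      ring

theorem eigenvalue_convergence_general
    (γ : ℝ) (hγ : 0 < γ) (N R : ℕ) (hN : 1 ≤ N)
    (h : ℝ) (hh : h = 1 / (N : ℝ))
    (J : ℕ → ℝ) (hJ : ∀ j ∈ Finset.Icc 1 R, 0 ≤ J j)
    (hnorm : (1 / (R : ℝ) ^ 3) * ∑ j ∈ Finset.Icc 1 R, J j * (j : ℝ) ^ 2 = 1)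
    (k : ℕ) :
    (0 ≤ γ * π ^ 2 * (k : ℝ) ^ 2 -
        (4 * γ / (h ^ 2 * (R : ℝ) ^ 3)) *
          ∑ j ∈ Finset.Icc 1 R, J j * Real.sin (π * k * h * j / 2) ^ 2 ∧
      γ * π ^ 2 * (k : ℝ) ^ 2 -
          (4 * γ / (h ^ 2 * (R : ℝ) ^ 3)) *
            ∑ j ∈ Finset.Icc 1 R, J j * Real.sin (π * k * h * j / 2) ^ 2
        ≤ (γ * π ^ 4 / 12) * (k : ℝ) ^ 4 * h ^ 2 *
            ((1 / (R : ℝ) ^ 3) * ∑ j ∈ Finset.Icc 1 R, J j * (j : ℝ) ^ 4)) ∧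
    ∀ ζ : ℝ, 0 < ζ → ζ < 1 / 2 →
      (1 / (R : ℝ) ^ 3) * (∑ j ∈ Finset.Icc 1 R, J j * (j : ℝ) ^ 4) ≤ (R : ℝ) ^ 2 →
      (R : ℝ) ≤ h ^ (-ζ) →
      0 ≤ γ * π ^ 2 * (k : ℝ) ^ 2 -
          (4 * γ / (h ^ 2 * (R : ℝ) ^ 3)) *
            ∑ j ∈ Finset.Icc 1 R, J j * Real.sin (π * k * h * j / 2) ^ 2 ∧
      γ * π ^ 2 * (k : ℝ) ^ 2 -
          (4 * γ / (h ^ 2 * (R : ℝ) ^ 3)) *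
            ∑ j ∈ Finset.Icc 1 R, J j * Real.sin (π * k * h * j / 2) ^ 2
        ≤ (γ * π ^ 4 / 12) * (k : ℝ) ^ 4 * h ^ (2 - 2 * ζ) := by
  have hh0 : 0 < h := by rw [hh]; exact one_div_pos.2 (Nat.cast_pos.2 hN)
  have hgap_nonneg := sub_nonneg.2 (discreteEigenvalue_le k hγ.le hh0.ne' hJ hnorm)
  have hgap_le := sq_sub_discreteEigenvalue_le k hγ.le hh0.ne' hJ hnorm
  refine ⟨⟨hgap_nonneg, hgap_le⟩, fun ζ _ _ hmoment hRζ => ⟨hgap_nonneg, hgap_le.trans ?_⟩⟩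
  rw [mul_assoc]
  gcongr
  exact sq_mul_le_rpow_two_sub_two_mul hh0 R.cast_nonneg hRζ hmoment

/-- **Convergence of eigenvalues** (Lemma 2.2). Under the second-moment normalization,
`0 ≤ γπ²k² − λ_k^h ≤ (γπ⁴/12) k⁴ h² (1/R³) ∑_{j=1}^R J(j) j⁴`; and if moreover
`(1/R³) ∑ J(j) j⁴ ≤ R²` and `R ≤ h^{-ζ}` with `0 < ζ < 1/2`, then
`0 ≤ γπ²k² − λ_k^h ≤ (γπ⁴/12) k⁴ h^{2−2ζ}`. -/
theorem eigenvalue_convergence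
    (γ : ℝ) (hγ : 0 < γ) (N R : ℕ) (hN : 1 ≤ N) (hR : 1 ≤ R)
    (h : ℝ) (hh : h = 1 / (N : ℝ))
    (J : ℕ → ℝ) (hJ : ∀ j ∈ Finset.Icc 1 R, 0 ≤ J j)
    (hnorm : (1 / (R : ℝ) ^ 3) * ∑ j ∈ Finset.Icc 1 R, J j * (j : ℝ) ^ 2 = 1)
    (k : ℕ) (hk : 1 ≤ k) :
    (0 ≤ γ * π ^ 2 * (k : ℝ) ^ 2 -
        (4 * γ / (h ^ 2 * (R : ℝ) ^ 3)) *
          ∑ j ∈ Finset.Icc 1 R, J j * Real.sin (π * k * h * j / 2) ^ 2 ∧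
      γ * π ^ 2 * (k : ℝ) ^ 2 -
          (4 * γ / (h ^ 2 * (R : ℝ) ^ 3)) *
            ∑ j ∈ Finset.Icc 1 R, J j * Real.sin (π * k * h * j / 2) ^ 2
        ≤ (γ * π ^ 4 / 12) * (k : ℝ) ^ 4 * h ^ 2 *
            ((1 / (R : ℝ) ^ 3) * ∑ j ∈ Finset.Icc 1 R, J j * (j : ℝ) ^ 4)) ∧
    ∀ ζ : ℝ, 0 < ζ → ζ < 1 / 2 →
      (1 / (R : ℝ) ^ 3) * (∑ j ∈ Finset.Icc 1 R, J j * (j : ℝ) ^ 4) ≤ (R : ℝ) ^ 2 →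
      (R : ℝ) ≤ h ^ (-ζ) →
      0 ≤ γ * π ^ 2 * (k : ℝ) ^ 2 -
          (4 * γ / (h ^ 2 * (R : ℝ) ^ 3)) *
            ∑ j ∈ Finset.Icc 1 R, J j * Real.sin (π * k * h * j / 2) ^ 2 ∧
      γ * π ^ 2 * (k : ℝ) ^ 2 -
          (4 * γ / (h ^ 2 * (R : ℝ) ^ 3)) *
            ∑ j ∈ Finset.Icc 1 R, J j * Real.sin (π * k * h * j / 2) ^ 2
        ≤ (γ * π ^ 4 / 12) * (k : ℝ) ^ 4 * h ^ (2 - 2 * ζ) :=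
  eigenvalue_convergence_general γ hγ N R hN h hh J hJ hnorm k
end

section
/- There exists a universal constant C > 0 such that for all γ > 0 and all t > 0, ∑_{k=1}^{∞} (1/(8·γ·k²)) · (1 − e^{−8·γ·k²·t}) ≤ (C/γ) · min{√(γ·t), 1}. (Time-integrated L² bound on the discrete semigroup, corresponding to the third estimate of Lemma 3.1.) -/
/-!
The `k`-th term is `∫₀ᵗ e^{-8γ(k+1)²s} ds`, hence at most `min t (1 / (8γ(k+1)²))`.
For a series with terms `≤ min a (b/(k+1)²)`, bounding the first `N = ⌊√(b/a)⌋` terms by `a`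
and the rest by `∑_{i>N} 1/i² ≤ 2/(N+1)` gives `3√(ab)`, while `∑ 1/i² ≤ 2` alone gives `2b`.
With `a = t`, `b = 1/(8γ)` this is the claim with `C = 3`.
-/

open Real Finset

lemma one_div_mul_one_sub_exp_neg_nonneg {c x : ℝ} (hc : 0 < c) (hx : 0 ≤ x) :
    0 ≤ 1 / c * (1 - exp (-(c * x))) := by
  have : exp (-(c * x)) ≤ 1 := exp_le_one_iff.2 (by nlinarith)
  exact mul_nonneg (by positivity) (by linarith)

lemma one_div_mul_one_sub_exp_neg_le_self {c : ℝ} (hc : 0 < c) (x : ℝ) :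
    1 / c * (1 - exp (-(c * x))) ≤ x := by
  have : 1 - exp (-(c * x)) ≤ c * x := by linarith [add_one_le_exp (-(c * x))]
  calc 1 / c * (1 - exp (-(c * x))) ≤ 1 / c * (c * x) := by gcongr
    _ = x := by field_simp

lemma one_div_mul_one_sub_exp_neg_le_one_div {c : ℝ} (hc : 0 < c) (x : ℝ) :
    1 / c * (1 - exp (-(c * x))) ≤ 1 / c := by
  have : 1 - exp (-(c * x)) ≤ 1 := by linarith [exp_pos (-(c * x))]
  simpa using mul_le_mul_of_nonneg_left this (one_div_pos.2 hc).le

lemma sum_range_inv_sq_add_le (N n : ℕ) :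
    ∑ k ∈ range n, ((((N + k : ℕ) : ℝ) + 1) ^ 2)⁻¹ ≤ 2 / ((N : ℝ) + 1) := by
  refine le_trans (le_of_eq ?_) (sum_Ioo_inv_sq_le N (N + 1 + n))
  rw [← Ico_add_one_left_eq_Ioo, sum_Ico_eq_sum_range, Nat.add_sub_cancel_left]
  refine sum_congr rfl fun k _ => ?_
  push_cast
  ring_nf

section SplitBound

variable {f : ℕ → ℝ} {a b : ℝ}

lemma sum_range_le_of_le_inv_sq (hf0 : ∀ k, 0 ≤ f k) (hfa : ∀ k, f k ≤ a)
    (hfb : ∀ k, f k ≤ b / ((k : ℝ) + 1) ^ 2) (hb : 0 ≤ b) (N n : ℕ) :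
    ∑ k ∈ range n, f k ≤ N * a + 2 * b / ((N : ℝ) + 1) := by
  have head : ∑ k ∈ range N, f k ≤ N * a := by
    simpa using sum_le_sum fun k (_ : k ∈ range N) => hfa k
  have tail : ∑ k ∈ range n, f (N + k) ≤ 2 * b / ((N : ℝ) + 1) :=
    calc ∑ k ∈ range n, f (N + k)
        ≤ ∑ k ∈ range n, b * ((((N + k : ℕ) : ℝ) + 1) ^ 2)⁻¹ :=
          sum_le_sum fun k _ => (hfb (N + k)).trans_eq (div_eq_mul_inv _ _)
      _ = b * ∑ k ∈ range n, ((((N + k : ℕ) : ℝ) + 1) ^ 2)⁻¹ := (mul_sum _ _ _).symm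
      _ ≤ b * (2 / ((N : ℝ) + 1)) := by gcongr; exact sum_range_inv_sq_add_le N n
      _ = 2 * b / ((N : ℝ) + 1) := by ring
  calc ∑ k ∈ range n, f k ≤ ∑ k ∈ range (N + n), f k :=
        sum_le_sum_of_subset_of_nonneg (range_mono (by omega)) fun k _ _ => hf0 k
    _ = ∑ k ∈ range N, f k + ∑ k ∈ range n, f (N + k) := sum_range_add f N n
    _ ≤ N * a + 2 * b / ((N : ℝ) + 1) := add_le_add head tail

lemma tsum_le_of_le_inv_sq (hf0 : ∀ k, 0 ≤ f k) (hfa : ∀ k, f k ≤ a)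
    (hfb : ∀ k, f k ≤ b / ((k : ℝ) + 1) ^ 2) (ha : 0 < a) (hb : 0 < b) :
    ∑' k, f k ≤ 3 * min (√(a * b)) b := by
  refine Real.tsum_le_of_sum_range_le hf0 fun n => ?_
  rw [mul_min_of_nonneg _ _ (by norm_num : (0 : ℝ) ≤ 3)]
  refine le_min ?_ ?_
  · set s := √(b / a)
    have hs : 0 < s := sqrt_pos.2 (div_pos hb ha)
    have hb_eq : b = a * s ^ 2 := by rw [sq_sqrt (div_pos hb ha).le]; field_simp
    have hab : √(a * b) = a * s := by
      rw [hb_eq, ← mul_assoc, ← sq, sqrt_mul (sq_nonneg a), sqrt_sq ha.le, sqrt_sq hs.le]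
    set N := ⌊s⌋₊
    have hN : (N : ℝ) ≤ s := Nat.floor_le hs.le
    have hN1 : s < N + 1 := Nat.lt_floor_add_one s
    have htail : 2 * b / ((N : ℝ) + 1) ≤ 2 * (a * s) := by
      rw [div_le_iff₀ (by positivity), hb_eq]
      nlinarith [mul_pos ha hs]
    calc ∑ k ∈ range n, f k ≤ N * a + 2 * b / ((N : ℝ) + 1) :=
          sum_range_le_of_le_inv_sq hf0 hfa hfb hb.le N n
      _ ≤ s * a + 2 * (a * s) := add_le_add (by gcongr) htail
      _ = 3 * √(a * b) := by rw [hab]; ring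
  · calc ∑ k ∈ range n, f k ≤ (0 : ℕ) * a + 2 * b / (((0 : ℕ) : ℝ) + 1) :=
          sum_range_le_of_le_inv_sq hf0 hfa hfb hb.le 0 n
      _ ≤ 3 * b := by
          simp only [Nat.cast_zero, zero_mul, zero_add, div_one]; linarith

end SplitBound

/-- **Time-integrated L² bound on the discrete semigroup** (third estimate of Lemma 3.1):
there is a universal constant `C` such that for all `γ, t > 0`,
`∑_{k≥1} (1/(8γk²))(1 − e^{−8γk²t}) ≤ (C/γ)·min(√(γt), 1)`. -/
theorem time_integrated_L2_bound :
    ∃ C : ℝ, 0 < C ∧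
      ∀ γ t : ℝ, 0 < γ → 0 < t →
        (∑' k : ℕ, (1 / (8 * γ * ((k : ℝ) + 1) ^ 2)) *
            (1 - Real.exp (-8 * γ * ((k : ℝ) + 1) ^ 2 * t)))
          ≤ (C / γ) * min (Real.sqrt (γ * t)) 1 := by
  refine ⟨3, by norm_num, fun γ t hγ ht => ?_⟩
  have hc : ∀ k : ℕ, 0 < 8 * γ * ((k : ℝ) + 1) ^ 2 := fun k => by positivity
  have hexp : ∀ k : ℕ, -8 * γ * ((k : ℝ) + 1) ^ 2 * t = -(8 * γ * ((k : ℝ) + 1) ^ 2 * t) :=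
    fun k => by ring
  simp_rw [hexp]
  refine (tsum_le_of_le_inv_sq (a := t) (b := 1 / (8 * γ))
    (fun k => one_div_mul_one_sub_exp_neg_nonneg (hc k) ht.le)
    (fun k => one_div_mul_one_sub_exp_neg_le_self (hc k) t)
    (fun k => (one_div_mul_one_sub_exp_neg_le_one_div (hc k) t).trans_eq (by field_simp))
    ht (by positivity)).trans ?_
  rw [div_mul_eq_mul_div, mul_div_assoc, ← min_div_div_right hγ.le]
  gcongr 3 * min ?_ ?_
  · rw [le_div_iff₀ hγ]
    calc √(t * (1 / (8 * γ))) * γ = √(t * (1 / (8 * γ)) * γ ^ 2) := by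
          rw [sqrt_mul' _ (sq_nonneg γ), sqrt_sq hγ.le]
      _ ≤ √(γ * t) := sqrt_le_sqrt (by field_simp; nlinarith)
  · gcongr; linarith
end

section
/- There exists a universal constant C > 0 such that for every natural number N ≥ 1 and all x, x' ∈ [0,1], ∑_{k=1}^{N} (1/k²) · (sin(π·k·x) − sin(π·k·x'))² ≤ C · |x − x'|. (Spatial regularity estimate for the discrete semigroup, first part of Lemma 3.2.) -/
open Real Finset

lemma sum_inv_sq_Ioc (K : ℕ) (hK : 1 ≤ K) (M : ℕ) :
    ∑ k ∈ Finset.Ioc K M, (1 : ℝ) / (k : ℝ) ^ 2 ≤ 1 / K - 1 / (max K M) := by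
  induction M with
  | zero => simp [Nat.max_eq_left (Nat.zero_le K)]
  | succ M ih =>
    rcases le_or_gt (M + 1) K with h | h
    · rw [Finset.Ioc_eq_empty (by omega), Nat.max_eq_left h]
      simp
    · have hKM : K ≤ M := by omega
      have hM1 : (1 : ℝ) ≤ (M : ℝ) := by
        have : 1 ≤ M := le_trans hK hKM
        exact_mod_cast this
      rw [Finset.sum_Ioc_succ_top hKM, Nat.max_eq_right (by omega : K ≤ M + 1)]
      rw [Nat.max_eq_right hKM] at ih
      have key : (1 : ℝ) / ((M : ℝ) + 1) ^ 2 ≤ 1 / (M : ℝ) - 1 / ((M : ℝ) + 1) := by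
        rw [div_sub_div _ _ (by linarith) (by linarith)]
        rw [div_le_div_iff₀ (by positivity) (by positivity)]
        nlinarith
      push_cast
      linarith

/-- **Spatial regularity estimate for the discrete semigroup** (first part of Lemma 3.2):
there is a universal constant `C` such that for every `N ≥ 1` and `x, x' ∈ [0,1]`,
`∑_{k=1}^N (1/k²)(sin(πkx) − sin(πkx'))² ≤ C·|x − x'|`. -/
theorem spatial_regularity_estimate :
    ∃ C : ℝ, 0 < C ∧
      ∀ N : ℕ, 1 ≤ N → ∀ x ∈ Set.Icc (0 : ℝ) 1, ∀ x' ∈ Set.Icc (0 : ℝ) 1,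
        ∑ k ∈ Finset.Icc 1 N,
            (1 / (k : ℝ) ^ 2) * (Real.sin (π * k * x) - Real.sin (π * k * x')) ^ 2
          ≤ C * |x - x'| := by
  refine ⟨2 * π ^ 2 + 4, by positivity, ?_⟩
  intro N hN x hx x' hx'
  set δ := |x - x'| with hδdef
  have hδnn : 0 ≤ δ := abs_nonneg _
  rcases eq_or_lt_of_le hδnn with hδ0 | hδpos
  · have hxx : x = x' := by
      have := abs_eq_zero.mp hδ0.symm
      linarith [this]
    subst hxx
    have hz : ∀ k ∈ Finset.Icc 1 N,
        (1 / (k : ℝ) ^ 2) * (Real.sin (π * k * x) - Real.sin (π * k * x)) ^ 2 = 0 := by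
      intro k _; simp
    rw [Finset.sum_congr rfl hz, Finset.sum_const_zero]
    exact mul_nonneg (by positivity) hδnn
  · have hδ1 : δ ≤ 1 := by
      rw [hδdef, abs_le]
      constructor <;> [linarith [hx.1, hx.2, hx'.1, hx'.2]; linarith [hx.1, hx.2, hx'.1, hx'.2]]
    set K := ⌈1 / δ⌉₊ with hKdef
    have hK1 : 1 ≤ K := Nat.one_le_ceil_iff.mpr (by positivity)
    have hKge : 1 / δ ≤ (K : ℝ) := Nat.le_ceil _
    have hKle : (K : ℝ) ≤ 2 / δ := by
      have h1 : (K : ℝ) < 1 / δ + 1 := Nat.ceil_lt_add_one (by positivity)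
      have h2 : (1 : ℝ) ≤ 1 / δ := by
        rw [le_div_iff₀ hδpos]; linarith
      have h3 : (2 : ℝ) / δ = 1 / δ + 1 / δ := by ring
      linarith
    set M := max N K with hMdef
    have hKM : K ≤ M := le_max_right _ _
    -- per-term bounds
    have hsin : ∀ k : ℕ, (Real.sin (π * k * x) - Real.sin (π * k * x')) ^ 2
        ≤ (π * k * δ) ^ 2 := by
      intro k
      have h1 : |Real.sin (π * k * x) - Real.sin (π * k * x')| ≤ |π * k * x - π * k * x'| := by
        have hs := Real.abs_sin_le_abs (x := (π * k * x - π * k * x') / 2)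
        have hc := Real.abs_cos_le_one ((π * k * x + π * k * x') / 2)
        have hsnn : (0:ℝ) ≤ |Real.sin ((π * k * x - π * k * x') / 2)| := abs_nonneg _
        have hcnn : (0:ℝ) ≤ |Real.cos ((π * k * x + π * k * x') / 2)| := abs_nonneg _
        rw [Real.sin_sub_sin, abs_mul, abs_mul, abs_two]
        rw [abs_div, abs_two] at hs
        nlinarith [mul_le_mul hs hc hcnn
          (by positivity : (0:ℝ) ≤ |π * k * x - π * k * x'| / 2)]
      have h2 : |π * k * x - π * k * x'| = π * k * δ := by
        rw [show π * k * x - π * k * x' = (π * k) * (x - x') by ring, abs_mul,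
          abs_of_nonneg (by positivity : (0:ℝ) ≤ π * k)]
      calc (Real.sin (π * k * x) - Real.sin (π * k * x')) ^ 2
          = |Real.sin (π * k * x) - Real.sin (π * k * x')| ^ 2 := (sq_abs _).symm
        _ ≤ (π * k * δ) ^ 2 := by
            rw [← h2]
            exact pow_le_pow_left₀ (abs_nonneg _) h1 2
    have hsin4 : ∀ k : ℕ, (Real.sin (π * k * x) - Real.sin (π * k * x')) ^ 2 ≤ 4 := by
      intro k
      have ha := Real.neg_one_le_sin (π * k * x)
      have hb := Real.sin_le_one (π * k * x)
      have hc := Real.neg_one_le_sin (π * k * x')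
      have hd := Real.sin_le_one (π * k * x')
      nlinarith
    set g : ℕ → ℝ := fun k => min (π ^ 2 * δ ^ 2) (4 / (k : ℝ) ^ 2) with hgdef
    have hgnn : ∀ k, 0 ≤ g k := by
      intro k; exact le_min (by positivity) (by positivity)
    have hfg : ∀ k ∈ Finset.Ioc 0 N,
        (1 / (k : ℝ) ^ 2) * (Real.sin (π * k * x) - Real.sin (π * k * x')) ^ 2 ≤ g k := by
      intro k hk
      have hk1 : 1 ≤ k := (Finset.mem_Ioc.mp hk).1
      have hkR : (1 : ℝ) ≤ (k : ℝ) := by exact_mod_cast hk1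
      have hkpos : (0 : ℝ) < (k : ℝ) ^ 2 := by positivity
      refine le_min ?_ ?_
      · calc (1 / (k : ℝ) ^ 2) * (Real.sin (π * k * x) - Real.sin (π * k * x')) ^ 2
            ≤ (1 / (k : ℝ) ^ 2) * (π * k * δ) ^ 2 := by
              exact mul_le_mul_of_nonneg_left (hsin k) (by positivity)
          _ = π ^ 2 * δ ^ 2 := by field_simp
      · calc (1 / (k : ℝ) ^ 2) * (Real.sin (π * k * x) - Real.sin (π * k * x')) ^ 2
            ≤ (1 / (k : ℝ) ^ 2) * 4 := by
              exact mul_le_mul_of_nonneg_left (hsin4 k) (by positivity)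
          _ = 4 / (k : ℝ) ^ 2 := by ring
    have hIcc : Finset.Icc 1 N = Finset.Ioc 0 N := rfl
    calc ∑ k ∈ Finset.Icc 1 N,
          (1 / (k : ℝ) ^ 2) * (Real.sin (π * k * x) - Real.sin (π * k * x')) ^ 2
        ≤ ∑ k ∈ Finset.Ioc 0 N, g k := by
          rw [hIcc]; exact Finset.sum_le_sum hfg
      _ ≤ ∑ k ∈ Finset.Ioc 0 M, g k := by
          apply Finset.sum_le_sum_of_subset_of_nonneg
          · exact Finset.Ioc_subset_Ioc_right (le_max_left _ _)
          · intro k _ _; exact hgnn k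
      _ = ∑ k ∈ Finset.Ioc 0 K, g k + ∑ k ∈ Finset.Ioc K M, g k :=
          (Finset.sum_Ioc_consecutive _ (Nat.zero_le K) hKM).symm
      _ ≤ (K : ℝ) * (π ^ 2 * δ ^ 2) + 4 * (1 / K) := by
          gcongr ?_ + ?_
          · calc ∑ k ∈ Finset.Ioc 0 K, g k
                ≤ ∑ _k ∈ Finset.Ioc 0 K, π ^ 2 * δ ^ 2 :=
                  Finset.sum_le_sum fun k _ => min_le_left _ _
              _ = (K : ℝ) * (π ^ 2 * δ ^ 2) := by
                  rw [Finset.sum_const, Nat.card_Ioc]; simp [nsmul_eq_mul]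
          · calc ∑ k ∈ Finset.Ioc K M, g k
                ≤ ∑ k ∈ Finset.Ioc K M, 4 * (1 / (k : ℝ) ^ 2) := by
                  refine Finset.sum_le_sum fun k _ => ?_
                  have := min_le_right (π ^ 2 * δ ^ 2) (4 / (k : ℝ) ^ 2)
                  calc g k ≤ 4 / (k : ℝ) ^ 2 := this
                    _ = 4 * (1 / (k : ℝ) ^ 2) := by ring
              _ = 4 * ∑ k ∈ Finset.Ioc K M, (1 : ℝ) / (k : ℝ) ^ 2 := by
                  rw [Finset.mul_sum]
              _ ≤ 4 * (1 / K) := by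
                  have h := sum_inv_sq_Ioc K hK1 M
                  have h2 : (0:ℝ) ≤ 1 / (max K M : ℕ) := by positivity
                  nlinarith [h, h2]
      _ ≤ (2 / δ) * (π ^ 2 * δ ^ 2) + 4 * δ := by
          gcongr ?_ + ?_
          · exact mul_le_mul_of_nonneg_right hKle (by positivity)
          · have : 1 / (K : ℝ) ≤ δ := by
              rw [div_le_iff₀ (by exact_mod_cast Nat.lt_of_lt_of_le Nat.zero_lt_one hK1)]
              rw [div_le_iff₀ hδpos] at hKge
              linarith
            linarith
      _ = (2 * π ^ 2 + 4) * δ := by field_simp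
end

section
/- There exists a universal constant C > 0 with the following property. For every γ > 0, every r ≥ 0, every natural number N ≥ 1 and all real numbers λ_1, …, λ_N satisfying 4·γ·k² ≤ λ_k ≤ γ·π²·k² for 1 ≤ k ≤ N, one has ∑_{k=1}^{N} (1/λ_k) · (1 − e^{−r·λ_k})² ≤ C · √(r/γ). (Temporal regularity estimate for the discrete semigroup, second part of Lemma 3.2.) -/
/-!
Each term satisfies `(1/λ)(1 - e^{-rλ})² ≤ min(r²λ, 1/λ)`, by `1 - e^{-x} ≤ min(x, 1)`.
Inserting `λ_k ≍ γk²` and writing `a = √(γr)`, the sum is at most `π²/γ · ∑ min(a⁴k², k⁻²)`.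
Splitting at `K = ⌊1/a⌋`, the terms `k ≤ K` contribute at most `a⁴K³ ≤ a`, and the tail
`∑_{k > K} k⁻² ≤ 2/(K+1)` is at most `2a`; hence the bound `3π² a/γ = 3π² √(r/γ)`.
-/

open Real Finset

theorem one_div_mul_one_sub_exp_neg_sq_le_min {r lam : ℝ} (hr : 0 ≤ r) (hlam : 0 ≤ lam) :
    (1 / lam) * (1 - exp (-r * lam)) ^ 2 ≤ min (r ^ 2 * lam) (1 / lam) := by
  have hexp_le_one : exp (-r * lam) ≤ 1 := exp_le_one_iff.mpr (by nlinarith)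
  have hlin : 1 - exp (-r * lam) ≤ r * lam := by
    linarith [add_one_le_exp (-r * lam), neg_mul r lam]
  have hsq_le_one : (1 - exp (-r * lam)) ^ 2 ≤ 1 := by nlinarith [exp_pos (-r * lam)]
  have hsq_le : (1 - exp (-r * lam)) ^ 2 ≤ (r * lam) ^ 2 :=
    pow_le_pow_left₀ (by linarith) hlin 2
  refine le_min ?_ ?_
  · calc (1 / lam) * (1 - exp (-r * lam)) ^ 2 ≤ (1 / lam) * (r * lam) ^ 2 := by gcongr
      _ = r ^ 2 * (lam⁻¹ * lam * lam) := by ring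
      _ = r ^ 2 * lam := by rw [inv_mul_mul_self]
  · simpa using mul_le_mul_of_nonneg_left hsq_le_one (one_div_nonneg.mpr hlam)

theorem one_div_mul_one_sub_exp_neg_sq_le_pi_sq_div_mul_min {γ r k lam : ℝ} (hγ : 0 < γ)
    (hr : 0 ≤ r) (hk : 0 < k) (hlo : 4 * γ * k ^ 2 ≤ lam) (hhi : lam ≤ γ * π ^ 2 * k ^ 2) :
    (1 / lam) * (1 - exp (-r * lam)) ^ 2 ≤ π ^ 2 / γ * min ((γ * r) ^ 2 * k ^ 2) (k ^ 2)⁻¹ := by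
  have hlam : 0 < lam := lt_of_lt_of_le (by positivity) hlo
  have hpi : 1 / 4 ≤ π ^ 2 := by nlinarith [pi_gt_three]
  rw [mul_min_of_nonneg _ _ (by positivity)]
  refine (one_div_mul_one_sub_exp_neg_sq_le_min hr hlam.le).trans (min_le_min ?_ ?_)
  · calc r ^ 2 * lam ≤ r ^ 2 * (γ * π ^ 2 * k ^ 2) := by gcongr
      _ = π ^ 2 / γ * ((γ * r) ^ 2 * k ^ 2) := by field_simp
  · calc 1 / lam ≤ 1 / (4 * γ * k ^ 2) := by gcongr
      _ = 1 / 4 / γ * (k ^ 2)⁻¹ := by ring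
      _ ≤ π ^ 2 / γ * (k ^ 2)⁻¹ := by gcongr

theorem sum_Icc_min_pow_four_mul_sq_inv_sq_le {a : ℝ} (ha : 0 ≤ a) (N : ℕ) :
    ∑ k ∈ Icc 1 N, min (a ^ 4 * (k : ℝ) ^ 2) ((k : ℝ) ^ 2)⁻¹ ≤ 3 * a := by
  rcases ha.eq_or_lt with rfl | ha
  · simp
  set K := ⌊1 / a⌋₊
  have hK : (K : ℝ) ≤ 1 / a := Nat.floor_le (by positivity)
  have hK' : 1 / a < K + 1 := Nat.lt_floor_add_one _
  have hlow : ∑ k ∈ (Icc 1 N).filter (· ≤ K), min (a ^ 4 * (k : ℝ) ^ 2) ((k : ℝ) ^ 2)⁻¹ ≤ a := by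
    calc _ ≤ ∑ k ∈ Icc 1 K, a ^ 4 * (k : ℝ) ^ 2 := by
          refine (sum_le_sum_of_subset_of_nonneg ?_ ?_).trans'
            (sum_le_sum fun k _ => min_le_left _ _)
          · intro k hk
            simp only [mem_filter, mem_Icc] at hk ⊢
            omega
          · intros
            positivity
      _ ≤ K • (a ^ 4 * (K : ℝ) ^ 2) := by
          have hcard : #(Icc 1 K) = K := by simp
          refine (sum_le_card_nsmul _ _ _ fun k hk => ?_).trans_eq (by rw [hcard])
          have : (k : ℝ) ≤ K := by exact_mod_cast (mem_Icc.mp hk).2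
          gcongr
      _ = a * (a * K) ^ 3 := by rw [nsmul_eq_mul]; ring
      _ ≤ a * 1 ^ 3 := by
          gcongr
          rwa [le_div_iff₀ ha, mul_comm] at hK
      _ = a := by ring
  have hhigh : ∑ k ∈ (Icc 1 N).filter (¬ · ≤ K), min (a ^ 4 * (k : ℝ) ^ 2) ((k : ℝ) ^ 2)⁻¹
      ≤ 2 * a := by
    calc _ ≤ ∑ k ∈ Ioo K (N + 1), ((k : ℝ) ^ 2)⁻¹ := by
          refine (sum_le_sum_of_subset_of_nonneg ?_ ?_).trans'
            (sum_le_sum fun k _ => min_le_right _ _)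
          · intro k hk
            simp only [mem_filter, mem_Icc, mem_Ioo] at hk ⊢
            omega
          · intros
            positivity
      _ ≤ 2 / (K + 1) := sum_Ioo_inv_sq_le _ _
      _ ≤ 2 * a := by
          rw [div_lt_iff₀ ha] at hK'
          rw [div_le_iff₀ (by positivity)]
          linarith
  rw [← sum_filter_add_sum_filter_not _ (· ≤ K)]
  linarith

/-- **Temporal regularity estimate for the discrete semigroup** (second part of Lemma 3.2):
there is a universal constant `C` such that whenever `4γk² ≤ λ_k ≤ γπ²k²` for `1 ≤ k ≤ N`,
`∑_{k=1}^N (1/λ_k)(1 − e^{−rλ_k})² ≤ C·√(r/γ)` for all `r ≥ 0`. -/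
theorem temporal_regularity_estimate :
    ∃ C : ℝ, 0 < C ∧
      ∀ γ : ℝ, 0 < γ → ∀ r : ℝ, 0 ≤ r → ∀ N : ℕ, 1 ≤ N → ∀ lam : ℕ → ℝ,
        (∀ k ∈ Finset.Icc 1 N,
          4 * γ * (k : ℝ) ^ 2 ≤ lam k ∧ lam k ≤ γ * π ^ 2 * (k : ℝ) ^ 2) →
        ∑ k ∈ Finset.Icc 1 N, (1 / lam k) * (1 - Real.exp (-r * lam k)) ^ 2
          ≤ C * Real.sqrt (r / γ) := by
  refine ⟨3 * π ^ 2, by positivity, fun γ hγ r hr N _ lam hlam => ?_⟩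
  set a := √(γ * r)
  have ha4 : a ^ 4 = (γ * r) ^ 2 := by
    rw [show 4 = 2 * 2 from rfl, pow_mul, sq_sqrt (by positivity)]
  have hsqrt : √(r / γ) = a / γ := by
    rw [show r / γ = γ * r / γ ^ 2 by field_simp, sqrt_div' _ (by positivity), sqrt_sq hγ.le]
  calc ∑ k ∈ Icc 1 N, (1 / lam k) * (1 - exp (-r * lam k)) ^ 2
      ≤ ∑ k ∈ Icc 1 N, π ^ 2 / γ * min (a ^ 4 * (k : ℝ) ^ 2) ((k : ℝ) ^ 2)⁻¹ :=
        sum_le_sum fun k hk => ha4 ▸ one_div_mul_one_sub_exp_neg_sq_le_pi_sq_div_mul_min hγ hr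
          (Nat.cast_pos.mpr (mem_Icc.mp hk).1) (hlam k hk).1 (hlam k hk).2
    _ = π ^ 2 / γ * ∑ k ∈ Icc 1 N, min (a ^ 4 * (k : ℝ) ^ 2) ((k : ℝ) ^ 2)⁻¹ :=
        (mul_sum ..).symm
    _ ≤ π ^ 2 / γ * (3 * a) := by
        gcongr
        exact sum_Icc_min_pow_four_mul_sq_inv_sq_le (sqrt_nonneg _) N
    _ = 3 * π ^ 2 * √(r / γ) := by rw [hsqrt]; ring
end

section
/- Let N, R, k ≥ 1 be natural numbers and h = 1/N with k·h·R ≤ 1. Then ∑_{j=1}^{R} sin²(π·k·h·j/2) ≥ k²·h²·R³/3, and consequently h²·R³ / (∑_{j=1}^{R} sin²(π·k·h·j/2)) ≤ 3/k². (The lower bound (2.7) on the eigenvalue denominator in the low-frequency regime, used in the proof of Lemma 2.1.) -/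
open Real Finset

lemma sum_sq_ge (R : ℕ) : (R : ℝ) ^ 3 / 3 ≤ ∑ j ∈ Finset.Icc 1 R, (j : ℝ) ^ 2 := by
  induction R with
  | zero => simp
  | succ n ih =>
    rw [Finset.sum_Icc_succ_top (by omega)]
    push_cast
    have hn : (0:ℝ) ≤ n := Nat.cast_nonneg n
    have : ((n:ℝ)+1)^3/3 = (n:ℝ)^3/3 + (n:ℝ)^2 + n + 1/3 := by ring
    linarith

/-- **Lower bound (2.7) on the eigenvalue denominator in the low-frequency regime**
(used in the proof of Lemma 2.1): if `k·h·R ≤ 1` with `h = 1/N`, then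
`∑_{j=1}^R sin²(πkhj/2) ≥ k²h²R³/3`, and consequently
`h²R³ / ∑_{j=1}^R sin²(πkhj/2) ≤ 3/k²`. -/
theorem eigenvalue_denominator_lower_bound
    (N R k : ℕ) (hN : 1 ≤ N) (hR : 1 ≤ R) (hk : 1 ≤ k)
    (h : ℝ) (hh : h = 1 / (N : ℝ)) (hkhR : (k : ℝ) * h * R ≤ 1) :
    (k : ℝ) ^ 2 * h ^ 2 * (R : ℝ) ^ 3 / 3 ≤
        ∑ j ∈ Finset.Icc 1 R, Real.sin (π * k * h * j / 2) ^ 2 ∧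
      h ^ 2 * (R : ℝ) ^ 3 / (∑ j ∈ Finset.Icc 1 R, Real.sin (π * k * h * j / 2) ^ 2)
        ≤ 3 / (k : ℝ) ^ 2 := by
  have hN0 : (0 : ℝ) < N := by exact_mod_cast hN
  have hh0 : 0 < h := by rw [hh]; positivity
  have hk0 : (0 : ℝ) < k := by exact_mod_cast hk
  have hR0 : (0 : ℝ) < R := by exact_mod_cast hR
  have key : ∀ j ∈ Finset.Icc 1 R,
      (k : ℝ) ^ 2 * h ^ 2 * (j : ℝ) ^ 2 ≤ Real.sin (π * k * h * j / 2) ^ 2 := by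
    intro j hj
    simp only [Finset.mem_Icc] at hj
    have hj0 : (0 : ℝ) < j := by exact_mod_cast hj.1
    have hjR : (j : ℝ) ≤ R := by exact_mod_cast hj.2
    have hkhj : (k : ℝ) * h * j ≤ 1 := by
      calc (k : ℝ) * h * j ≤ (k : ℝ) * h * R := by
            apply mul_le_mul_of_nonneg_left hjR; positivity
        _ ≤ 1 := hkhR
    have hx0 : (0 : ℝ) ≤ π * k * h * j / 2 := by positivity
    have hx1 : π * k * h * j / 2 ≤ π / 2 := by
      nlinarith [Real.pi_pos, mul_le_mul_of_nonneg_left hkhj Real.pi_pos.le]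
    have := Real.mul_le_sin hx0 hx1
    have h2 : (k : ℝ) * h * j ≤ Real.sin (π * k * h * j / 2) := by
      have hpi := Real.pi_pos
      calc (k : ℝ) * h * j = 2 / π * (π * k * h * j / 2) := by
            field_simp
        _ ≤ _ := this
    have hnn : (0 : ℝ) ≤ (k : ℝ) * h * j := by positivity
    calc (k : ℝ) ^ 2 * h ^ 2 * (j : ℝ) ^ 2 = ((k : ℝ) * h * j) ^ 2 := by ring
      _ ≤ Real.sin (π * k * h * j / 2) ^ 2 := by
          apply pow_le_pow_left₀ hnn h2
  have hsum : (k : ℝ) ^ 2 * h ^ 2 * (R : ℝ) ^ 3 / 3 ≤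
      ∑ j ∈ Finset.Icc 1 R, Real.sin (π * k * h * j / 2) ^ 2 := by
    calc (k : ℝ) ^ 2 * h ^ 2 * (R : ℝ) ^ 3 / 3
        = (k : ℝ) ^ 2 * h ^ 2 * ((R : ℝ) ^ 3 / 3) := by ring
      _ ≤ (k : ℝ) ^ 2 * h ^ 2 * ∑ j ∈ Finset.Icc 1 R, (j : ℝ) ^ 2 := by
          apply mul_le_mul_of_nonneg_left (sum_sq_ge R); positivity
      _ = ∑ j ∈ Finset.Icc 1 R, (k : ℝ) ^ 2 * h ^ 2 * (j : ℝ) ^ 2 := by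
          rw [Finset.mul_sum]
      _ ≤ _ := Finset.sum_le_sum key
  refine ⟨hsum, ?_⟩
  have hSpos : 0 < ∑ j ∈ Finset.Icc 1 R, Real.sin (π * k * h * j / 2) ^ 2 := by
    calc (0 : ℝ) < (k : ℝ) ^ 2 * h ^ 2 * (R : ℝ) ^ 3 / 3 := by positivity
      _ ≤ _ := hsum
  rw [div_le_div_iff₀ hSpos (by positivity)]
  nlinarith [hsum]
end
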